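/- arXiv:1110.5037 — 2 statements merged into one kernel-verified Lean document; each statement's English description precedes it below -/
import Mathlib

section
/- Let T be a collection of countable closed bounded subsets of ω₁, closed under taking closed initial segments, and ordered by s ≤ t iff s is an initial segment of t (i.e., s = t ∩ (sup s + 1)). Suppose that whenever s, t ∈ T have the same supremum δ and lim(s) ∩ lim(t) is unbounded in δ, then s = t. Then T contains at most one uncountable chain that is downward closed and whose union is unbounded in ω₁; more precisely, if b and b' are two such chains, then b = b'. -/
/-!
The union `B` of a path `b` is closed and unbounded in `ω₁`, and `b` consists exactly of the
members of `T` that are closed initial segments of `B`. Given two paths with unions `B` and `B'`,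
the set `C = lim B ∩ lim B'` is unbounded in `ω₁`, hence so is `lim C`. For `δ ∈ lim C` the
segments `B ∩ [0, δ]` and `B' ∩ [0, δ]` belong to `T`, both have supremum `δ`, and the limit
points of both contain `C ∩ δ`, which is unbounded in `δ`; so they are equal. As such `δ` are
unbounded in `ω₁`, `B = B'`, and therefore `b = b'`.
-/

open Ordinal Set

/-- The set of limit points of a set `s` of ordinals: ordinals `ν > 0` that are
limits of elements of `s` below `ν`. -/
def limPts (s : Set Ordinal) : Set Ordinal :=
  {ν | 0 < ν ∧ sSup (s ∩ Set.Iio ν) = ν}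

/-- `s` is an initial segment of `t`, i.e. `s = t ∩ (sup s + 1)`. -/
def InitSeg (s t : Set Ordinal) : Prop :=
  s = t ∩ Set.Iic (sSup s)

/-- `s` is unbounded in `δ`. -/
def UnbIn (δ : Ordinal) (s : Set Ordinal) : Prop :=
  ∀ α < δ, ∃ β ∈ s, α < β ∧ β < δ

/-- `T` is a collection of countable closed bounded subsets of `ω₁` closed
under taking closed initial segments. -/
def IsSegTree (T : Set (Set Ordinal)) : Prop :=
  (∀ t ∈ T, t.Countable ∧ t ⊆ Set.Iio ω₁ ∧ (∀ x ⊆ t, x.Nonempty → sSup x ∈ t)) ∧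
  (∀ t ∈ T, ∀ α : Ordinal, t ∩ Set.Iic α ∈ T)

/-- An uncountable path through `T`: a downward-closed chain (under the
initial-segment order) whose union is unbounded in `ω₁`. -/
def IsPath (T b : Set (Set Ordinal)) : Prop :=
  b ⊆ T ∧ (∀ s ∈ b, ∀ t ∈ b, InitSeg s t ∨ InitSeg t s) ∧
  (∀ t ∈ b, ∀ s ∈ T, InitSeg s t → s ∈ b) ∧
  (∀ α < ω₁, ∃ β ∈ ⋃₀ b, α < β)

section Ordinals

variable {s t : Set Ordinal} {α γ δ ν : Ordinal}

theorem mem_limPts_iff : ν ∈ limPts s ↔ 0 < ν ∧ UnbIn ν s := by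
  refine and_congr_right fun _ => ⟨fun h α hα => ?_, fun h => ?_⟩
  · obtain ⟨β, ⟨hβs, hβν⟩, hαβ⟩ := exists_lt_of_lt_csSup' (h.symm ▸ hα)
    exact ⟨β, hβs, hαβ, hβν⟩
  · refine le_antisymm (csSup_le' fun _ hβ => hβ.2.le) (le_of_forall_lt fun α hα => ?_)
    obtain ⟨β, hβs, hαβ, hβν⟩ := h α hα
    exact hαβ.trans_le (le_csSup ⟨ν, fun _ hx => hx.2.le⟩ ⟨hβs, hβν⟩)

theorem UnbIn.mono (h : UnbIn δ s) (hst : s ∩ Iio δ ⊆ t) : UnbIn δ t := fun α hα => by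
  obtain ⟨β, hβs, hαβ, hβδ⟩ := h α hα
  exact ⟨β, hst ⟨hβs, hβδ⟩, hαβ, hβδ⟩

theorem UnbIn.of_limPts (h : UnbIn δ (limPts s)) : UnbIn δ s := fun α hα => by
  obtain ⟨ν, hν, hαν, hνδ⟩ := h α hα
  obtain ⟨β, hβs, hαβ, hβν⟩ := (mem_limPts_iff.1 hν).2 α hαν
  exact ⟨β, hβs, hαβ, hβν.trans hνδ⟩

theorem limPts_inter_Iic (hν : ν ∈ limPts s) (hνδ : ν ≤ δ) : ν ∈ limPts (s ∩ Iic δ) := by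
  rw [mem_limPts_iff] at hν ⊢
  exact ⟨hν.1, hν.2.mono fun β hβ => ⟨hβ.1, hβ.2.le.trans hνδ⟩⟩

theorem UnbIn.csInf_inter_Ioi_mem (hs : UnbIn δ s) (hγ : γ < δ) :
    sInf (s ∩ Ioi γ) ∈ s ∩ Ioo γ δ := by
  obtain ⟨β, hβs, hγβ, hβδ⟩ := hs γ hγ
  obtain ⟨hmem, hlt⟩ := csInf_mem (s := s ∩ Ioi γ) ⟨β, hβs, hγβ⟩
  exact ⟨hmem, hlt, (csInf_le' (show β ∈ s ∩ Ioi γ from ⟨hβs, hγβ⟩)).trans_lt hβδ⟩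

theorem nfp_lt_omega_one {g : Ordinal → Ordinal} (hg : ∀ γ < ω₁, g γ < ω₁) (hα : α < ω₁) :
    nfp g α < ω₁ :=
  nfp_lt_ord (by simp) hg hα

theorem nfp_mem_limPts {g : Ordinal → Ordinal} (hg : ∀ γ < ω₁, g γ < ω₁)
    (hs : ∀ γ < ω₁, ∃ β ∈ s, γ < β ∧ β ≤ g γ) (hα : α < ω₁) : nfp g α ∈ limPts s := by
  have hiter : ∀ n, g^[n] α < ω₁ := fun n => (iterate_le_nfp g α n).trans_lt (nfp_lt_omega_one hg hα)
  have hstep : ∀ n, ∃ β ∈ s, g^[n] α < β ∧ β < nfp g α := fun n => by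
    obtain ⟨β, hβs, hlt, hle⟩ := hs _ (hiter n)
    obtain ⟨β', -, hlt', hle'⟩ := hs _ (hiter (n + 1))
    refine ⟨β, hβs, hlt, ?_⟩
    calc β ≤ g^[n + 1] α := by rwa [Function.iterate_succ_apply']
      _ < β' := hlt'
      _ ≤ g^[n + 2] α := by rwa [Function.iterate_succ_apply']
      _ ≤ nfp g α := iterate_le_nfp g α _
  obtain ⟨β, -, hαβ, hβ⟩ := hstep 0
  refine mem_limPts_iff.2 ⟨(hαβ.trans hβ).pos, fun γ hγ => ?_⟩
  obtain ⟨n, hn⟩ := lt_nfp_iff.1 hγ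
  obtain ⟨β, hβs, hlt, hβ⟩ := hstep n
  exact ⟨β, hβs, hn.trans hlt, hβ⟩

theorem UnbIn.limPts_inter_omega_one (hs : UnbIn ω₁ s) (ht : UnbIn ω₁ t) :
    UnbIn ω₁ (limPts s ∩ limPts t) := by
  set g : Ordinal → Ordinal := fun γ => max (sInf (s ∩ Ioi γ)) (sInf (t ∩ Ioi γ))
  have hg : ∀ γ < ω₁, g γ < ω₁ := fun γ hγ =>
    max_lt (hs.csInf_inter_Ioi_mem hγ).2.2 (ht.csInf_inter_Ioi_mem hγ).2.2
  intro α hα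
  refine ⟨nfp g α, ⟨nfp_mem_limPts hg (fun γ hγ => ?_) hα, nfp_mem_limPts hg (fun γ hγ => ?_) hα⟩,
    ?_, nfp_lt_omega_one hg hα⟩
  · exact ⟨_, (hs.csInf_inter_Ioi_mem hγ).1, (hs.csInf_inter_Ioi_mem hγ).2.1, le_max_left _ _⟩
  · exact ⟨_, (ht.csInf_inter_Ioi_mem hγ).1, (ht.csInf_inter_Ioi_mem hγ).2.1, le_max_right _ _⟩
  · exact (hs.csInf_inter_Ioi_mem hα).2.1.trans_le ((le_max_left _ _).trans (iterate_le_nfp g α 1))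

theorem initSeg_inter_Iic (t : Set Ordinal) (γ : Ordinal) : InitSeg (t ∩ Iic γ) t := by
  have hle : sSup (t ∩ Iic γ) ≤ γ := csSup_le' fun _ h => h.2
  ext x
  exact ⟨fun hx => ⟨hx.1, le_csSup ⟨γ, fun _ h => h.2⟩ hx⟩, fun hx => ⟨hx.1, hx.2.trans hle⟩⟩

theorem csSup_inter_Iic_of_mem (h : δ ∈ s) : sSup (s ∩ Iic δ) = δ :=
  IsGreatest.csSup_eq ⟨⟨h, mem_Iic.2 le_rfl⟩, fun _ hy => hy.2⟩

end Ordinals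

section Paths

variable {T b b' : Set (Set Ordinal)} {s t : Set Ordinal} {γ ν : Ordinal}

theorem IsSegTree.csSup_lt_omega_one (hT : IsSegTree T) (hs : s ∈ T) : sSup s < ω₁ := by
  rcases s.eq_empty_or_nonempty with rfl | hne
  · simpa using omega_pos 1
  · exact (hT.1 s hs).2.1 ((hT.1 s hs).2.2 s subset_rfl hne)

theorem IsSegTree.bddAbove (hT : IsSegTree T) (ht : t ∈ T) : BddAbove t :=
  ⟨ω₁, fun _ hx => ((hT.1 t ht).2.1 hx).le⟩

namespace IsPath

theorem sUnion_subset_Iio (hb : IsPath T b) (hT : IsSegTree T) : ⋃₀ b ⊆ Iio ω₁ :=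
  sUnion_subset fun t ht => (hT.1 t (hb.1 ht)).2.1

theorem unbIn_sUnion (hb : IsPath T b) (hT : IsSegTree T) : UnbIn ω₁ (⋃₀ b) := fun α hα => by
  obtain ⟨β, hβ, hαβ⟩ := hb.2.2.2 α hα
  exact ⟨β, hβ, hαβ, hb.sUnion_subset_Iio hT hβ⟩

theorem exists_le_csSup (hb : IsPath T b) (hT : IsSegTree T) (hγ : γ < ω₁) :
    ∃ t ∈ b, γ ≤ sSup t := by
  obtain ⟨β, ⟨t, ht, hβt⟩, hγβ⟩ := hb.2.2.2 γ hγ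
  exact ⟨t, ht, hγβ.le.trans (le_csSup (hT.bddAbove (hb.1 ht)) hβt)⟩

theorem initSeg_sUnion (hb : IsPath T b) (hT : IsSegTree T) (ht : t ∈ b) :
    InitSeg t (⋃₀ b) := by
  ext x
  refine ⟨fun hx => ⟨⟨t, ht, hx⟩, le_csSup (hT.bddAbove (hb.1 ht)) hx⟩,
    fun ⟨⟨u, hu, hxu⟩, hxt⟩ => ?_⟩
  rcases hb.2.1 u hu t ht with hut | htu
  · exact (hut ▸ hxu : x ∈ t ∩ _).1
  · exact htu ▸ ⟨hxu, hxt⟩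

theorem sUnion_inter_Iic_of_le (hb : IsPath T b) (hT : IsSegTree T) (ht : t ∈ b)
    (hγ : γ ≤ sSup t) : ⋃₀ b ∩ Iic γ = t ∩ Iic γ := by
  conv_rhs => rw [hb.initSeg_sUnion hT ht]
  rw [inter_assoc, Iic_inter_Iic, min_eq_right hγ]

theorem sUnion_inter_Iic_mem (hb : IsPath T b) (hT : IsSegTree T) (hγ : γ < ω₁) :
    ⋃₀ b ∩ Iic γ ∈ b := by
  obtain ⟨t, ht, hγt⟩ := hb.exists_le_csSup hT hγ
  rw [hb.sUnion_inter_Iic_of_le hT ht hγt]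
  exact hb.2.2.1 t ht _ (hT.2 t (hb.1 ht) γ) (initSeg_inter_Iic t γ)

theorem mem_sUnion_of_mem_limPts (hb : IsPath T b) (hT : IsSegTree T) (hν : ν < ω₁)
    (hlim : ν ∈ limPts (⋃₀ b)) : ν ∈ ⋃₀ b := by
  obtain ⟨t, ht, hνt⟩ := hb.exists_le_csSup hT hν
  have hsub : ⋃₀ b ∩ Iio ν ⊆ t := fun x hx =>
    (hb.sUnion_inter_Iic_of_le hT ht hνt ▸ ⟨hx.1, mem_Iic.2 hx.2.le⟩ : x ∈ t ∩ Iic ν).1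
  obtain ⟨β, hβ, -, hβν⟩ := (mem_limPts_iff.1 hlim).2 0 hlim.1
  have hsup := (hT.1 t (hb.1 ht)).2.2 _ hsub ⟨β, hβ, hβν⟩
  rw [hlim.2] at hsup
  exact ⟨t, ht, hsup⟩

theorem mem_iff (hb : IsPath T b) (hT : IsSegTree T) : s ∈ b ↔ s ∈ T ∧ InitSeg s (⋃₀ b) := by
  refine ⟨fun hs => ⟨hb.1 hs, hb.initSeg_sUnion hT hs⟩, fun ⟨hsT, hs⟩ => ?_⟩
  rw [hs]
  exact hb.sUnion_inter_Iic_mem hT (hT.csSup_lt_omega_one hsT)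

theorem sUnion_subset (hb : IsPath T b) (hb' : IsPath T b') (hT : IsSegTree T)
    (had : ∀ s ∈ T, ∀ t ∈ T, sSup s = sSup t →
      UnbIn (sSup s) (limPts s ∩ limPts t) → s = t) :
    ⋃₀ b ⊆ ⋃₀ b' := fun x hx => by
  set C := limPts (⋃₀ b) ∩ limPts (⋃₀ b')
  have hC : UnbIn ω₁ C := (hb.unbIn_sUnion hT).limPts_inter_omega_one (hb'.unbIn_sUnion hT)
  obtain ⟨δ, ⟨hδC, -⟩, hxδ, hδ⟩ :=
    hC.limPts_inter_omega_one hC x (hb.sUnion_subset_Iio hT hx)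
  obtain ⟨hδ0, hCδ⟩ := mem_limPts_iff.1 hδC
  have hδb : δ ∈ ⋃₀ b := hb.mem_sUnion_of_mem_limPts hT hδ
    (mem_limPts_iff.2 ⟨hδ0, (hCδ.mono fun _ hν => hν.1.1).of_limPts⟩)
  have hδb' : δ ∈ ⋃₀ b' := hb'.mem_sUnion_of_mem_limPts hT hδ
    (mem_limPts_iff.2 ⟨hδ0, (hCδ.mono fun _ hν => hν.1.2).of_limPts⟩)
  have heq : ⋃₀ b ∩ Iic δ = ⋃₀ b' ∩ Iic δ := by
    refine had _ (hb.1 (hb.sUnion_inter_Iic_mem hT hδ)) _ (hb'.1 (hb'.sUnion_inter_Iic_mem hT hδ))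
      (by rw [csSup_inter_Iic_of_mem hδb, csSup_inter_Iic_of_mem hδb']) ?_
    rw [csSup_inter_Iic_of_mem hδb]
    exact hCδ.mono fun ν hν => ⟨limPts_inter_Iic hν.1.1 hν.2.le, limPts_inter_Iic hν.1.2 hν.2.le⟩
  exact (heq ▸ ⟨hx, hxδ.le⟩ : x ∈ ⋃₀ b' ∩ Iic δ).1

end IsPath

end Paths

/-- If elements of `T` with the same supremum whose limit-point sets have
unbounded intersection in that supremum coincide, then `T` has at most one
uncountable path. -/
theorem at_most_one_path (T : Set (Set Ordinal)) (hT : IsSegTree T)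
    (had : ∀ s ∈ T, ∀ t ∈ T, sSup s = sSup t →
      UnbIn (sSup s) (limPts s ∩ limPts t) → s = t)
    (b b' : Set (Set Ordinal)) (hb : IsPath T b) (hb' : IsPath T b') :
    b = b' := by
  have hU : ⋃₀ b = ⋃₀ b' := (hb.sUnion_subset hb' hT had).antisymm (hb'.sUnion_subset hb hT had)
  ext s
  rw [hb.mem_iff hT, hb'.mem_iff hT, hU]
end

section
/- There exists a sequence ⟨e_β : β < ω₁⟩ such that each e_β : β → ω is injective and for all β < β' < ω₁ the set {α < β : e_β(α) ≠ e_{β'}(α)} is finite. -/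
open Ordinal Set Filter Function

/-!
Build `e β` by transfinite recursion, keeping each term injective on `β` with co-infinite
range and finitely different from every earlier term. At a successor `γ + 1`, send `γ` to an
unused value. At a countable limit `β`, take a cofinal sequence `b₀ ≤ b₁ ≤ ⋯` below `β`. The
ranges of the `e bₙ` increase modulo finite sets, so an injective sequence `a` eventually avoids
each of them. Set `e β α = e bₙ α` for the least `n` with `α < bₙ`: below each `bₙ` only finitely
many `α` hit `range a` or repeat a value taken at a smaller `n`, and these are reassigned
injectively to odd terms of `a`. The even terms of `a` are never used, so the range stays
co-infinite.
-/

noncomputable section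

variable {ι κ : Type*}

def CoinfiniteInjOn (f : ι → ℕ) (s : Set ι) : Prop :=
  InjOn f s ∧ (f '' s)ᶜ.Infinite

theorem eventuallyEq_cofinite_inf_principal_iff {f g : ι → κ} {s : Set ι} :
    f =ᶠ[cofinite ⊓ 𝓟 s] g ↔ {x | x ∈ s ∧ f x ≠ g x}.Finite := by
  simp only [EventuallyEq, eventually_inf_principal, eventually_cofinite, Classical.not_imp]

theorem Filter.EventuallyEq.trans_cofinite_inf_principal {f g h : ι → κ} {s t : Set ι}
    (hfg : f =ᶠ[cofinite ⊓ 𝓟 s] g) (hgh : g =ᶠ[cofinite ⊓ 𝓟 t] h) (hst : s ⊆ t) :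
    f =ᶠ[cofinite ⊓ 𝓟 s] h :=
  hfg.trans (hgh.filter_mono (inf_le_inf_left _ (principal_mono.2 hst)))

theorem finite_image_diff_image_of_eventuallyEq {f g : ι → κ} {s t : Set ι}
    (h : f =ᶠ[cofinite ⊓ 𝓟 s] g) (hst : s ⊆ t) : (f '' s \ g '' t).Finite := by
  refine ((eventuallyEq_cofinite_inf_principal_iff.1 h).image f).subset ?_
  rintro _ ⟨⟨x, hx, rfl⟩, hnot⟩
  exact ⟨x, ⟨hx, fun hfg => hnot ⟨x, hst hx, hfg.symm⟩⟩, rfl⟩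

theorem CoinfiniteInjOn.exists_insert {f : ι → ℕ} {s : Set ι} {a : ι} (ha : a ∉ s)
    (hf : CoinfiniteInjOn f s) : ∃ g, CoinfiniteInjOn g (insert a s) ∧ EqOn g f s := by
  classical
  obtain ⟨m, hm⟩ := hf.2.nonempty
  have heq : EqOn (update f a m) f s := fun x hx => update_of_ne (ne_of_mem_of_not_mem hx ha) _ _
  refine ⟨update f a m, ⟨(injOn_insert ha).2 ⟨hf.1.congr heq.symm, ?_⟩, ?_⟩, heq⟩
  · rwa [update_self, heq.image_eq]
  · rw [image_insert_eq, update_self, heq.image_eq]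
    refine (hf.2.sdiff (finite_singleton m)).mono ?_
    rintro x ⟨hx, hxm⟩ hins
    exact hins.elim hxm hx

theorem injOn_of_injOn_levelSets {L : Type*} [LinearOrder L] {h : ι → κ} {s : Set ι}
    (level : ι → L) (hinj : ∀ k, InjOn h {x ∈ s | level x = k}) :
    InjOn h {x ∈ s | ∀ y ∈ s, level y < level x → h y ≠ h x} := by
  rintro x ⟨hx, hx_new⟩ y ⟨hy, hy_new⟩ hxy
  rcases lt_trichotomy (level x) (level y) with hlt | heq | hgt
  · exact absurd hxy (hy_new x hx hlt)
  · exact hinj (level x) ⟨hx, rfl⟩ ⟨hy, heq.symm⟩ hxy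
  · exact absurd hxy.symm (hx_new y hy hgt)

variable {S : ℕ → Set ι} {E : ℕ → ι → ℕ}

theorem exists_injective_forall_notMem_image (hS : Monotone S)
    (hE : ∀ n, (E n '' S n)ᶜ.Infinite)
    (hcoh : ∀ m n, m ≤ n → E m =ᶠ[cofinite ⊓ 𝓟 (S m)] E n) :
    ∃ a : ℕ → ℕ, Injective a ∧ ∀ j k, j ≤ k → a k ∉ E j '' S j := by
  have hinf : ∀ k, (⋃ j ≤ k, E j '' S j)ᶜ.Infinite := by
    intro k
    have hfin : (⋃ j ≤ k, (E j '' S j \ E k '' S k)).Finite := (finite_Iic k).biUnion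
      fun j hj => finite_image_diff_image_of_eventuallyEq (hcoh j k hj) (hS hj)
    refine ((hE k).sdiff hfin).mono ?_
    rintro x ⟨hxk, hx_fin⟩ hx
    obtain ⟨j, hj, hxj⟩ := mem_iUnion₂.1 hx
    exact hx_fin (mem_iUnion₂.2 ⟨j, hj, hxj, hxk⟩)
  obtain ⟨a, ha_mono, ha⟩ :=
    extraction_forall_of_frequently fun k => Nat.frequently_atTop_iff_infinite.2 (hinf k)
  exact ⟨a, ha_mono.injective, fun j k hjk hmem => ha k (mem_iUnion₂.2 ⟨j, hjk, hmem⟩)⟩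

namespace Gluing

def level (S : ℕ → Set ι) (x : ι) : ℕ := sInf {n | x ∈ S n}

theorem mem_level {x : ι} (hx : x ∈ ⋃ n, S n) : x ∈ S (level S x) :=
  Nat.sInf_mem (mem_iUnion.1 hx)

theorem level_le {x : ι} {n : ℕ} (hx : x ∈ S n) : level S x ≤ n := Nat.sInf_le hx

def levelValue (S : ℕ → Set ι) (E : ℕ → ι → ℕ) (x : ι) : ℕ := E (level S x) x

def collisions (S : ℕ → Set ι) (E : ℕ → ι → ℕ) (a : ℕ → ℕ) : Set ι :=
  {x ∈ ⋃ n, S n | levelValue S E x ∈ range a ∨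
    ∃ y ∈ ⋃ n, S n, level S y < level S x ∧ levelValue S E y = levelValue S E x}

theorem finite_collisions_level {a : ℕ → ℕ} (hS : Monotone S)
    (hinj : ∀ n, InjOn (E n) (S n)) (hcoh : ∀ m n, m ≤ n → E m =ᶠ[cofinite ⊓ 𝓟 (S m)] E n)
    (ha : ∀ j k, j ≤ k → a k ∉ E j '' S j) (k : ℕ) :
    {x ∈ collisions S E a | level S x = k}.Finite := by
  have hsub : {x ∈ collisions S E a | level S x = k} ⊆ S k := by
    rintro x ⟨⟨hx, -⟩, rfl⟩
    exact mem_level hx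
  refine Finite.of_finite_image (f := E k) ?_ ((hinj k).mono hsub)
  refine (((finite_Iio k).image a).union ((finite_Iio k).biUnion fun j hj =>
    ((eventuallyEq_cofinite_inf_principal_iff.1 (hcoh j k (le_of_lt hj))).image (E j)))).subset ?_
  rintro _ ⟨x, ⟨⟨hx, hcoll⟩, rfl⟩, rfl⟩
  have hxk : x ∈ S (level S x) := mem_level hx
  rcases hcoll with ⟨m, hm⟩ | ⟨y, hy, hlt, hyx⟩
  · refine Or.inl ⟨m, not_le.1 fun hkm => ha _ m hkm ⟨x, hxk, hm.symm⟩, hm⟩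
  · refine Or.inr (mem_iUnion₂.2 ⟨level S y, hlt, y, ⟨mem_level hy, fun hyy => ?_⟩, hyx⟩)
    have : y = x := hinj _ (hS hlt.le (mem_level hy)) hxk (hyy.symm.trans hyx)
    exact hlt.ne (congrArg (level S) this)

theorem finite_collisions_inter {a : ℕ → ℕ} (hS : Monotone S)
    (hinj : ∀ n, InjOn (E n) (S n)) (hcoh : ∀ m n, m ≤ n → E m =ᶠ[cofinite ⊓ 𝓟 (S m)] E n)
    (ha : ∀ j k, j ≤ k → a k ∉ E j '' S j) (n : ℕ) :
    (collisions S E a ∩ S n).Finite := by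
  refine ((finite_Iic n).biUnion fun k _ => finite_collisions_level hS hinj hcoh ha k).subset ?_
  rintro x ⟨hx, hxn⟩
  exact mem_iUnion₂.2 ⟨level S x, level_le hxn, hx, rfl⟩

theorem injOn_levelValue_diff_collisions (hinj : ∀ n, InjOn (E n) (S n)) (a : ℕ → ℕ) :
    InjOn (levelValue S E) ((⋃ n, S n) \ collisions S E a) := by
  refine (injOn_of_injOn_levelSets (s := ⋃ n, S n) (level S) fun k => ?_).mono ?_
  · rintro x ⟨hx, rfl⟩ y ⟨hy, hxy⟩ h
    exact hinj _ (mem_level hx) (hxy ▸ mem_level hy) (by simpa [levelValue, hxy] using h)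
  · rintro x ⟨hx, hxC⟩
    exact ⟨hx, fun y hy hlt hyx => hxC ⟨hx, Or.inr ⟨y, hy, hlt, hyx⟩⟩⟩

end Gluing

open Gluing in
theorem exists_coinfiniteInjOn_iUnion (hS : Monotone S) (hE : ∀ n, CoinfiniteInjOn (E n) (S n))
    (hcoh : ∀ m n, m ≤ n → E m =ᶠ[cofinite ⊓ 𝓟 (S m)] E n) :
    ∃ f, CoinfiniteInjOn f (⋃ n, S n) ∧ ∀ n, E n =ᶠ[cofinite ⊓ 𝓟 (S n)] f := by
  classical
  obtain ⟨a, ha_inj, ha⟩ := exists_injective_forall_notMem_image hS (fun n => (hE n).2) hcoh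
  have hfin := finite_collisions_inter hS (fun n => (hE n).1) hcoh ha
  set C := collisions S E a
  have hC : C.Countable := by
    refine (countable_iUnion fun n => (hfin n).countable).mono fun x hx => ?_
    exact mem_iUnion.2 ⟨level S x, hx, mem_level hx.1⟩
  obtain ⟨c, hc⟩ := countable_iff_exists_injOn.1 hC
  let f x := if x ∈ C then a (2 * c x + 1) else levelValue S E x
  have hnew := injOn_levelValue_diff_collisions (fun n => (hE n).1) a
  have hnew_range : ∀ x ∈ ⋃ n, S n, x ∉ C → levelValue S E x ∉ range a :=
    fun x hx hxC hmem => hxC ⟨hx, Or.inl hmem⟩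
  refine ⟨f, ⟨?injOn, ?coinfinite⟩, fun n => ?coherent⟩
  case injOn =>
    intro x hx y hy hxy
    by_cases hxC : x ∈ C <;> by_cases hyC : y ∈ C <;>
      simp only [f, hxC, hyC, if_true, if_false] at hxy
    · exact hc hxC hyC (by have := ha_inj hxy; omega)
    · exact absurd ⟨_, hxy⟩ (hnew_range y hy hyC)
    · exact absurd ⟨_, hxy.symm⟩ (hnew_range x hx hxC)
    · exact hnew ⟨hx, hxC⟩ ⟨hy, hyC⟩ hxy
  case coinfinite =>
    have h_even : Injective fun m => a (2 * m) := ha_inj.comp fun m n h => by simpa using h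
    refine (infinite_range_of_injective h_even).mono ?_
    rintro _ ⟨m, rfl⟩ ⟨x, hx, hfx⟩
    by_cases hxC : x ∈ C <;> simp only [f, hxC, if_true, if_false] at hfx
    · have := ha_inj hfx; omega
    · exact hnew_range x hx hxC ⟨_, hfx.symm⟩
  case coherent =>
    refine eventuallyEq_cofinite_inf_principal_iff.2 <| ((hfin n).union <|
      (finite_Iic n).biUnion fun k hk =>
        eventuallyEq_cofinite_inf_principal_iff.1 (hcoh k n hk)).subset ?_
    rintro x ⟨hxn, hne⟩
    by_cases hxC : x ∈ C
    · exact Or.inl ⟨hxC, hxn⟩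
    · have hx : x ∈ S (level S x) := mem_level (mem_iUnion.2 ⟨n, hxn⟩)
      refine Or.inr (mem_iUnion₂.2 ⟨level S x, level_le hxn, hx, fun h => hne ?_⟩)
      simp only [f, hxC, if_false, levelValue, h]

end

theorem countable_Iio_of_lt_omega_one {β : Ordinal} (hβ : β < ω₁) : (Iio β).Countable := by
  rw [← Cardinal.le_aleph0_iff_set_countable, Cardinal.mk_Iio_ordinal, Cardinal.lift_le_aleph0,
    ← Cardinal.lt_aleph_one_iff, ← Cardinal.lt_ord, Cardinal.ord_aleph]
  exact hβ

theorem exists_monotone_iUnion_Iio_eq {β : Ordinal} (hβ : β < ω₁)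
    (hlim : Order.IsSuccLimit β) :
    ∃ b : ℕ → Ordinal, Monotone b ∧ (∀ n, b n < β) ∧ ⋃ n, Iio (b n) = Iio β := by
  have : Countable (Iio β) := countable_Iio_of_lt_omega_one hβ
  have : Nonempty (Iio β) := ⟨⟨0, hlim.bot_lt⟩⟩
  obtain ⟨b, hb_mono, hb⟩ := exists_seq_monotone_tendsto_atTop_atTop (Iio β)
  refine ⟨fun n => b n, fun m n h => hb_mono h, fun n => (b n).2, ?_⟩
  ext α
  simp only [mem_iUnion, mem_Iio]
  refine ⟨fun ⟨n, hn⟩ => hn.trans (b n).2, fun hα => ?_⟩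
  obtain ⟨n, hn⟩ := (hb.eventually_ge_atTop ⟨Order.succ α, hlim.succ_lt hα⟩).exists
  exact ⟨n, Order.succ_le_iff.1 hn⟩

section Recursion

variable {e : Ordinal → Ordinal → ℕ} {β : Ordinal}

theorem exists_coherent_extension (hβ : β < ω₁) (he : ∀ γ < β, CoinfiniteInjOn (e γ) (Iio γ))
    (hcoh : ∀ γ < β, ∀ δ < γ, e δ =ᶠ[cofinite ⊓ 𝓟 (Iio δ)] e γ) :
    ∃ f, CoinfiniteInjOn f (Iio β) ∧ ∀ γ < β, e γ =ᶠ[cofinite ⊓ 𝓟 (Iio γ)] f := by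
  have hcoh_le : ∀ γ < β, ∀ δ ≤ γ, e δ =ᶠ[cofinite ⊓ 𝓟 (Iio δ)] e γ := fun γ hγ δ hδ =>
    hδ.eq_or_lt.elim (fun h => h ▸ EventuallyEq.rfl) (hcoh γ hγ δ)
  rcases zero_or_succ_or_isSuccLimit β with rfl | ⟨γ, rfl⟩ | hlim
  · refine ⟨0, ⟨by simp, ?_⟩, fun _ hγ => (not_lt_zero hγ).elim⟩
    simpa using infinite_univ
  · obtain ⟨f, hf, hfe⟩ := (he γ (Order.lt_succ γ)).exists_insert self_notMem_Iio
    refine ⟨f, Order.Iio_succ_eq_insert γ ▸ hf, fun δ hδ => ?_⟩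
    exact (hcoh_le γ (Order.lt_succ γ) δ (Order.lt_succ_iff.1 hδ)).trans_cofinite_inf_principal
      (hfe.symm.eventuallyEq_of_mem (mem_inf_of_right (mem_principal_self _)))
      (Iio_subset_Iio (Order.lt_succ_iff.1 hδ))
  · obtain ⟨b, hb_mono, hbβ, hb⟩ := exists_monotone_iUnion_Iio_eq hβ hlim
    obtain ⟨f, hf, hfe⟩ := exists_coinfiniteInjOn_iUnion (S := fun n => Iio (b n))
      (E := fun n => e (b n)) (fun m n h => Iio_subset_Iio (hb_mono h)) (fun n => he _ (hbβ n))
      (fun m n h => hcoh_le _ (hbβ n) _ (hb_mono h))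
    refine ⟨f, hb ▸ hf, fun γ hγ => ?_⟩
    obtain ⟨n, hn⟩ := mem_iUnion.1 (hb.symm ▸ hγ : γ ∈ ⋃ n, Iio (b n))
    exact (hcoh_le _ (hbβ n) γ hn.le).trans_cofinite_inf_principal (hfe n)
      (Iio_subset_Iio hn.le)

end Recursion

noncomputable def coherentSeq (β : Ordinal) : Ordinal → ℕ :=
  Classical.epsilon fun f =>
    CoinfiniteInjOn f (Iio β) ∧ ∀ γ < β, coherentSeq γ =ᶠ[cofinite ⊓ 𝓟 (Iio γ)] f
termination_by β

theorem coherentSeq_spec {β : Ordinal} (hβ : β < ω₁) :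
    CoinfiniteInjOn (coherentSeq β) (Iio β) ∧
      ∀ γ < β, coherentSeq γ =ᶠ[cofinite ⊓ 𝓟 (Iio γ)] coherentSeq β := by
  induction β using WellFoundedLT.induction with
  | _ β ih =>
    rw [coherentSeq]
    exact Classical.epsilon_spec <| exists_coherent_extension hβ
      (fun γ hγ => (ih γ hγ (hγ.trans hβ)).1) fun γ hγ => (ih γ hγ (hγ.trans hβ)).2

/-- There is a coherent sequence of injections `e_β : β → ω` for `β < ω₁`:
each `e_β` is injective on `β`, and any two agree off a finite set. -/
theorem exists_coherent_sequence :
    ∃ e : Ordinal → Ordinal → ℕ,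
      (∀ β < ω₁, Set.InjOn (e β) (Set.Iio β)) ∧
      (∀ β β' : Ordinal, β < β' → β' < ω₁ →
        {α : Ordinal | α < β ∧ e β α ≠ e β' α}.Finite) :=
  ⟨coherentSeq, fun _ hβ => (coherentSeq_spec hβ).1.1, fun _ _ hββ' hβ' =>
    eventuallyEq_cofinite_inf_principal_iff.1 ((coherentSeq_spec hβ').2 _ hββ')⟩
end
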